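/- arXiv:0806.2096 — 2 statements merged into one kernel-verified Lean document; each statement's English description precedes it below -/
import Mathlib

section
/- An n-step staircase C = C₁ ∪ ... ∪ C_n is closed under componentwise minimum (intersection): if A, B ∈ C then (min(x_A,x_B), min(y_A,y_B), min(z_A,z_B)) ∈ C. Hence an n-step staircase is a poset poly-antimatroid. -/
/-- Accessibility (A1) for a set of points in `ℕ³`: every nonzero point of `C`
has a point of `C` obtained by decrementing one coordinate. -/
def Accessible3 (C : Set (ℕ × ℕ × ℕ)) : Prop :=
  ∀ p ∈ C, p ≠ (0, 0, 0) →
    (1 ≤ p.1 ∧ (p.1 - 1, p.2.1, p.2.2) ∈ C) ∨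
    (1 ≤ p.2.1 ∧ (p.1, p.2.1 - 1, p.2.2) ∈ C) ∨
    (1 ≤ p.2.2 ∧ (p.1, p.2.1, p.2.2 - 1) ∈ C)

/-- Componentwise maximum (multiset union) of two points of `ℕ³`. -/
def sup3 (a b : ℕ × ℕ × ℕ) : ℕ × ℕ × ℕ :=
  (max a.1 b.1, max a.2.1 b.2.1, max a.2.2 b.2.2)

/-- Componentwise minimum (multiset intersection) of two points of `ℕ³`. -/
def inf3 (a b : ℕ × ℕ × ℕ) : ℕ × ℕ × ℕ :=
  (min a.1 b.1, min a.2.1 b.2.1, min a.2.2 b.2.2)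

/-- Componentwise order on points of `ℕ³`. -/
def le3 (a b : ℕ × ℕ × ℕ) : Prop :=
  a.1 ≤ b.1 ∧ a.2.1 ≤ b.2.1 ∧ a.2.2 ≤ b.2.2

/-- The digital cuboid with minimum corner `a` and maximum corner `b`. -/
def Cuboid (a b : ℕ × ℕ × ℕ) : Set (ℕ × ℕ × ℕ) :=
  {p | a.1 ≤ p.1 ∧ p.1 ≤ b.1 ∧ a.2.1 ≤ p.2.1 ∧ p.2.1 ≤ b.2.1 ∧
       a.2.2 ≤ p.2.2 ∧ p.2.2 ≤ b.2.2}

/-- `lo 0, hi 0`, ..., `lo (n-1), hi (n-1)` are the corners of a regular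
sequence of `n` digital cuboids. -/
def RegularSeq (n : ℕ) (lo hi : ℕ → ℕ × ℕ × ℕ) : Prop :=
  1 ≤ n ∧ lo 0 = (0, 0, 0) ∧
  (∀ i < n, le3 (lo i) (hi i) ∧ lo i ≠ hi i) ∧
  (∀ i, i + 1 < n →
    (le3 (lo i) (lo (i + 1)) ∧ lo i ≠ lo (i + 1)) ∧
    le3 (lo (i + 1)) (hi i) ∧
    (le3 (hi i) (hi (i + 1)) ∧ hi i ≠ hi (i + 1)))

/-- The `n`-step staircase determined by a (regular) sequence of cuboids. -/
def Staircase (n : ℕ) (lo hi : ℕ → ℕ × ℕ × ℕ) : Set (ℕ × ℕ × ℕ) :=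
  {p | ∃ i < n, p ∈ Cuboid (lo i) (hi i)}



/- A regular sequence has nondecreasing minimum corners, so of two cuboids the one with the smaller
index has the smaller minimum corner. If `a` lies in that cuboid `[l, h]` and `b` in one whose
minimum corner is `≥ l`, then `l ≤ a ⊓ b ≤ a ≤ h`, so `a ⊓ b` stays in `[l, h]`. -/

lemma le3_iff_le {a b : ℕ × ℕ × ℕ} : le3 a b ↔ a ≤ b := by
  simp only [le3, Prod.le_def]

lemma inf3_eq_inf (a b : ℕ × ℕ × ℕ) : inf3 a b = a ⊓ b := rfl

lemma cuboid_eq_Icc (a b : ℕ × ℕ × ℕ) : Cuboid a b = Set.Icc a b := by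
  ext p
  simp only [Cuboid, Set.mem_ofPred_eq, Set.mem_Icc, Prod.le_def]
  tauto

lemma RegularSeq.monotoneOn_lo {n : ℕ} {lo hi : ℕ → ℕ × ℕ × ℕ} (hreg : RegularSeq n lo hi) :
    MonotoneOn lo (Set.Iio n) :=
  monotoneOn_of_le_add_one Set.ordConnected_Iio fun i _ _ hi1 =>
    le3_iff_le.mp (hreg.2.2.2 i hi1).1.1

lemma inf_mem_Icc_of_le {α : Type*} [SemilatticeInf α] {l h l' h' a b : α}
    (ha : a ∈ Set.Icc l h) (hb : b ∈ Set.Icc l' h') (hl : l ≤ l') : a ⊓ b ∈ Set.Icc l h :=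
  ⟨le_inf ha.1 (hl.trans hb.1), inf_le_left.trans ha.2⟩

theorem staircase_closed_under_intersection (n : ℕ) (lo hi : ℕ → ℕ × ℕ × ℕ)
    (hreg : RegularSeq n lo hi) :
    ∀ a ∈ Staircase n lo hi, ∀ b ∈ Staircase n lo hi,
      inf3 a b ∈ Staircase n lo hi := by
  intro a ha b hb
  simp only [Staircase, cuboid_eq_Icc, inf3_eq_inf, Set.mem_ofPred_eq] at ha hb ⊢
  obtain ⟨i, hi_lt, ha⟩ := ha
  obtain ⟨j, hj_lt, hb⟩ := hb
  rcases le_total i j with hij | hji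
  · exact ⟨i, hi_lt, inf_mem_Icc_of_le ha hb (hreg.monotoneOn_lo hi_lt hj_lt hij)⟩
  · exact ⟨j, hj_lt, inf_comm a b ▸ inf_mem_Icc_of_le hb ha (hreg.monotoneOn_lo hj_lt hi_lt hji)⟩
end

section
/- For every N ≥ 0, the set S = {(x,y,z) ∈ ℕ³ : x,y ≤ N, z ≤ 1, and z = 1 → x + y ≥ N} is a three-dimensional poly-antimatroid whose convex dimension is at least N+1. -/
/-!
The sets `S ∩ {z = 0}` and `S ∩ {z = 1}` are a square and the part of it on or above the
antidiagonal `x + y = N`; accessibility and closure under joins are then coordinate arithmetic.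
A point `(x, N - x, 1)` is join-irreducible: a join of points of `S` that equals it has a joinand
with `z = 1`, which lies below it and still satisfies `x + y ≥ N`, hence equals it. So each of these
`N + 1` points lies on one of the chains. A chain is monotone, so any two of its points are
comparable, while distinct points of the antidiagonal are not: no chain carries two of them.
-/

def eppsteinSet (N : ℕ) : Set (ℕ × ℕ × ℕ) :=
  {p | p.1 ≤ N ∧ p.2.1 ≤ N ∧ p.2.2 ≤ 1 ∧ (p.2.2 = 1 → N ≤ p.1 + p.2.1)}

theorem accessible3_eppsteinSet (N : ℕ) : Accessible3 (eppsteinSet N) := by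
  rintro ⟨x, y, z⟩ ⟨hx, hy, hz, hxy⟩ hne
  simp only [eppsteinSet, Set.mem_ofPred_eq, ne_eq, Prod.mk.injEq] at *
  omega

section EppsteinSet

variable {N : ℕ}

theorem sup3_mem_eppsteinSet {a b : ℕ × ℕ × ℕ} (ha : a ∈ eppsteinSet N)
    (hb : b ∈ eppsteinSet N) : sup3 a b ∈ eppsteinSet N := by
  obtain ⟨x₁, y₁, z₁⟩ := a
  obtain ⟨x₂, y₂, z₂⟩ := b
  simp only [eppsteinSet, Set.mem_ofPred_eq, sup3] at *
  omega

theorem antidiagonal_mem_eppsteinSet {x : ℕ} (hx : x ≤ N) : (x, N - x, 1) ∈ eppsteinSet N :=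
  ⟨hx, Nat.sub_le N x, le_rfl, fun _ => (Nat.add_sub_cancel' hx).ge⟩

theorem eq_of_antidiagonal_le {x y : ℕ} (hx : x ≤ N) (hy : y ≤ N)
    (h : ((x, N - x, 1) : ℕ × ℕ × ℕ) ≤ (y, N - y, 1)) : x = y := by
  simp only [Prod.mk_le_mk] at h
  omega

theorem eq_antidiagonal_of_le {x : ℕ} (hx : x ≤ N) {q : ℕ × ℕ × ℕ} (hq : q ∈ eppsteinSet N)
    (hle : q ≤ (x, N - x, 1)) (hz : 1 ≤ q.2.2) : q = (x, N - x, 1) := by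
  obtain ⟨a, b, c⟩ := q
  obtain ⟨-, -, hc, hab⟩ := hq
  dsimp only at hc hab hz
  simp only [Prod.mk_le_mk] at hle
  have := hab (by omega)
  simp only [Prod.mk.injEq]
  omega

theorem exists_eq_antidiagonal_of_eq_sup {ι : Type*} {s : Finset ι} {q : ι → ℕ × ℕ × ℕ}
    (hq : ∀ i ∈ s, q i ∈ eppsteinSet N) {x : ℕ} (hx : x ≤ N)
    (h : ((x, N - x, 1) : ℕ × ℕ × ℕ) =
      (s.sup fun i => (q i).1, s.sup fun i => (q i).2.1, s.sup fun i => (q i).2.2)) :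
    ∃ i ∈ s, q i = (x, N - x, 1) := by
  simp only [Prod.mk.injEq] at h
  obtain ⟨hsx, hsy, hsz⟩ := h
  obtain ⟨i, hi, hzi⟩ : ∃ i ∈ s, 1 ≤ (q i).2.2 :=
    (Finset.le_sup_iff Nat.zero_lt_one).mp hsz.le
  refine ⟨i, hi, eq_antidiagonal_of_le hx (hq i hi) ?_ hzi⟩
  refine ⟨?_, ?_, ?_⟩
  · exact hsx ▸ Finset.le_sup (f := fun i => (q i).1) hi
  · exact hsy ▸ Finset.le_sup (f := fun i => (q i).2.1) hi
  · exact hsz ▸ Finset.le_sup (f := fun i => (q i).2.2) hi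

end EppsteinSet

def IsUnitStep (p q : ℕ × ℕ × ℕ) : Prop :=
  q = (p.1 + 1, p.2.1, p.2.2) ∨ q = (p.1, p.2.1 + 1, p.2.2) ∨ q = (p.1, p.2.1, p.2.2 + 1)

theorem IsUnitStep.le {p q : ℕ × ℕ × ℕ} (h : IsUnitStep p q) : p ≤ q := by
  obtain ⟨a, b, c⟩ := p
  rcases h with rfl | rfl | rfl <;> simp [Prod.mk_le_mk]

theorem monotoneOn_of_isUnitStep {len : ℕ} {f : ℕ → ℕ × ℕ × ℕ}
    (hf : ∀ j < len, IsUnitStep (f j) (f (j + 1))) : MonotoneOn f (Set.Iic len) :=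
  monotoneOn_of_le_succ Set.ordConnected_Iic fun j _ _ hsucc => by
    rw [Order.succ_eq_add_one] at hsucc ⊢
    exact (hf j (Nat.succ_le_iff.mp hsucc)).le

theorem eq_of_isUnitStep_of_eq_antidiagonal {N len : ℕ} {f : ℕ → ℕ × ℕ × ℕ}
    (hf : ∀ j < len, IsUnitStep (f j) (f (j + 1))) {j j' x y : ℕ} (hj : j ≤ len) (hj' : j' ≤ len)
    (hx : x ≤ N) (hy : y ≤ N) (hfj : f j = (x, N - x, 1)) (hfj' : f j' = (y, N - y, 1)) :
    x = y := by
  have hmono := monotoneOn_of_isUnitStep hf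
  rcases le_total j j' with h | h
  · exact eq_of_antidiagonal_le hx hy (hfj ▸ hfj' ▸ hmono hj hj' h)
  · exact (eq_of_antidiagonal_le hy hx (hfj ▸ hfj' ▸ hmono hj' hj h)).symm

theorem eppstein_example (N : ℕ) :
    Accessible3 {p : ℕ × ℕ × ℕ |
        p.1 ≤ N ∧ p.2.1 ≤ N ∧ p.2.2 ≤ 1 ∧ (p.2.2 = 1 → N ≤ p.1 + p.2.1)} ∧
    (∀ a ∈ {p : ℕ × ℕ × ℕ |
        p.1 ≤ N ∧ p.2.1 ≤ N ∧ p.2.2 ≤ 1 ∧ (p.2.2 = 1 → N ≤ p.1 + p.2.1)},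
      ∀ b ∈ {p : ℕ × ℕ × ℕ |
        p.1 ≤ N ∧ p.2.1 ≤ N ∧ p.2.2 ≤ 1 ∧ (p.2.2 = 1 → N ≤ p.1 + p.2.1)},
        sup3 a b ∈ {p : ℕ × ℕ × ℕ |
          p.1 ≤ N ∧ p.2.1 ≤ N ∧ p.2.2 ≤ 1 ∧ (p.2.2 = 1 → N ≤ p.1 + p.2.1)}) ∧
    (∀ (k : ℕ) (len : Fin k → ℕ) (f : Fin k → ℕ → ℕ × ℕ × ℕ),
      (∀ i : Fin k,
        f i 0 = (0, 0, 0) ∧ f i (len i) = (N, N, 1) ∧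
        (∀ j ≤ len i, f i j ∈ {p : ℕ × ℕ × ℕ |
          p.1 ≤ N ∧ p.2.1 ≤ N ∧ p.2.2 ≤ 1 ∧ (p.2.2 = 1 → N ≤ p.1 + p.2.1)}) ∧
        (∀ j < len i,
          f i (j + 1) = ((f i j).1 + 1, (f i j).2.1, (f i j).2.2) ∨
          f i (j + 1) = ((f i j).1, (f i j).2.1 + 1, (f i j).2.2) ∨
          f i (j + 1) = ((f i j).1, (f i j).2.1, (f i j).2.2 + 1))) →
      {p : ℕ × ℕ × ℕ |
          p.1 ≤ N ∧ p.2.1 ≤ N ∧ p.2.2 ≤ 1 ∧ (p.2.2 = 1 → N ≤ p.1 + p.2.1)} =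
        {p : ℕ × ℕ × ℕ | ∃ g : Fin k → ℕ, (∀ i, g i ≤ len i) ∧
          p = (Finset.univ.sup (fun i => (f i (g i)).1),
               Finset.univ.sup (fun i => (f i (g i)).2.1),
               Finset.univ.sup (fun i => (f i (g i)).2.2))} →
      N + 1 ≤ k) := by
  refine ⟨accessible3_eppsteinSet N, fun a ha b hb => sup3_mem_eppsteinSet ha hb, ?_⟩
  intro k len f hchains hjoins
  have hvisit (x : Fin (N + 1)) : ∃ i, ∃ j ≤ len i, f i j = ((x : ℕ), N - x, 1) := by
    have hx := Nat.lt_succ_iff.mp x.isLt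
    obtain ⟨g, hg, hjoin⟩ := hjoins.subset (antidiagonal_mem_eppsteinSet hx)
    obtain ⟨i, -, hi⟩ := exists_eq_antidiagonal_of_eq_sup
      (fun i _ => (hchains i).2.2.1 (g i) (hg i)) hx hjoin
    exact ⟨i, g i, hg i, hi⟩
  choose F j hj hFj using hvisit
  have hF : Function.Injective F := by
    intro x y hxy
    have hjy := hj y
    have hFjy := hFj y
    rw [← hxy] at hjy hFjy
    exact Fin.ext (eq_of_isUnitStep_of_eq_antidiagonal (hchains (F x)).2.2.2 (hj x) hjy
      (Nat.lt_succ_iff.mp x.isLt) (Nat.lt_succ_iff.mp y.isLt) (hFj x) hFjy)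
  simpa using Fintype.card_le_of_injective F hF
end
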